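/- KL inequality from a conditional stability estimate: let θ ∈ (0,2) and C > 0, and assume the conditional stability estimate ‖ι f₁ − ι f₂‖_X ≤ ‖A f₁ − A f₂‖_Y^θ holds for all f₁, f₂ ∈ Z with ‖f₁‖_Z ≤ C and ‖f₂‖_Z ≤ C. Let α > 0 and let x ∈ Z with ‖x‖_Z ≤ C, ‖x_α‖_Z ≤ C and x ≠ x_α. Then (T_α(x) − T_α(x_α))^{1 − θ/2} ≤ 2^{θ/2 − 1} · ⟨A*A(x − x†) + α x, x − x_α⟩_Z / ‖ι(x − x_α)‖_X. -/

import Mathlib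

/-!
Since `x_α` is a critical point of the quadratic functional `T_α`, writing `u = x - x_α` and
`Q = ‖A u‖² + α ‖u‖²`, the gap `T_α(x) - T_α(x_α)` equals `Q / 2` and the derivative
`⟨∇T_α(x), u⟩` equals `Q`. The stability estimate gives `‖ι u‖ ≤ ‖A u‖^θ ≤ Q^(θ/2)`, and
`(Q/2)^(1-θ/2) · Q^(θ/2) = 2^(θ/2-1) · Q`.
-/

open scoped InnerProductSpace

section Tikhonov

open ContinuousLinearMap

variable {Z Y : Type*} [NormedAddCommGroup Z] [InnerProductSpace ℝ Z] [CompleteSpace Z]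
  [NormedAddCommGroup Y] [InnerProductSpace ℝ Y] [CompleteSpace Y]

noncomputable def tikhonov (A : Z →L[ℝ] Y) (y : Y) (α : ℝ) (z : Z) : ℝ :=
  1 / 2 * ‖A z - y‖ ^ 2 + α / 2 * ‖z‖ ^ 2

lemma inner_tikhonov_gradient (A : Z →L[ℝ] Y) (y : Y) (α : ℝ) (z u : Z) :
    ⟪adjoint A (A z - y) + α • z, u⟫_ℝ = ⟪A z - y, A u⟫_ℝ + α * ⟪z, u⟫_ℝ := by
  rw [inner_add_left, adjoint_inner_left, real_inner_smul_left]

lemma tikhonov_add_sub_tikhonov (A : Z →L[ℝ] Y) (y : Y) (α : ℝ) (z u : Z) :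
    tikhonov A y α (z + u) - tikhonov A y α z =
      ⟪adjoint A (A z - y) + α • z, u⟫_ℝ + (1 / 2 * ‖A u‖ ^ 2 + α / 2 * ‖u‖ ^ 2) := by
  rw [inner_tikhonov_gradient, tikhonov, tikhonov, map_add, add_sub_right_comm (A z),
    norm_add_sq_real, norm_add_sq_real]
  ring

lemma inner_tikhonov_gradient_add (A : Z →L[ℝ] Y) (y : Y) (α : ℝ) (z u : Z) :
    ⟪adjoint A (A (z + u) - y) + α • (z + u), u⟫_ℝ =
      ⟪adjoint A (A z - y) + α • z, u⟫_ℝ + (‖A u‖ ^ 2 + α * ‖u‖ ^ 2) := by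
  rw [inner_tikhonov_gradient, inner_tikhonov_gradient, map_add, add_sub_right_comm (A z),
    inner_add_left, inner_add_left, real_inner_self_eq_norm_sq, real_inner_self_eq_norm_sq]
  ring

lemma tikhonov_gradient_eq_zero {A : Z →L[ℝ] Y} {y : Y} {α : ℝ} {z : Z}
    (h : adjoint A (A z) + α • z = adjoint A y) : adjoint A (A z - y) + α • z = 0 := by
  rw [map_sub, sub_add_eq_add_sub, h, sub_self]

end Tikhonov

lemma half_rpow_one_sub_le_of_le_rpow {Q s p : ℝ} (hQ : 0 < Q) (hs : 0 < s) (h : s ≤ Q ^ p) :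
    (Q / 2) ^ (1 - p) ≤ 2 ^ (p - 1) * Q / s := by
  have hQs : Q ^ (1 - p) * s ≤ Q := calc
    Q ^ (1 - p) * s ≤ Q ^ (1 - p) * Q ^ p := by gcongr
    _ = Q := by rw [← Real.rpow_add hQ]; simp
  rw [Real.div_rpow hQ.le zero_le_two, div_eq_mul_inv, ← Real.rpow_neg zero_le_two, neg_sub,
    mul_comm, mul_div_assoc]
  gcongr
  rwa [le_div_iff₀ hs]

theorem stmt16_general {Z Y X : Type*} [NormedAddCommGroup Z] [InnerProductSpace ℝ Z]
    [CompleteSpace Z] [NormedAddCommGroup Y] [InnerProductSpace ℝ Y] [CompleteSpace Y]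
    [NormedAddCommGroup X] [NormedSpace ℝ X]
    (ι : Z →L[ℝ] X) (hι : Function.Injective ι)
    (A : Z →L[ℝ] Y) (xdag : Z)
    (θ C : ℝ) (hθ : θ ∈ Set.Ioo (0 : ℝ) 2)
    (hstab : ∀ f₁ f₂ : Z, ‖f₁‖ ≤ C → ‖f₂‖ ≤ C → ‖ι f₁ - ι f₂‖ ≤ ‖A f₁ - A f₂‖ ^ θ)
    (α : ℝ) (hα : 0 < α)
    (T : Z → ℝ) (hT : ∀ x, T x = (1 / 2) * ‖A x - A xdag‖ ^ 2 + (α / 2) * ‖x‖ ^ 2)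
    (xa : Z)
    (hnormal : (ContinuousLinearMap.adjoint A) (A xa) + α • xa =
      (ContinuousLinearMap.adjoint A) (A xdag))
    (x : Z) (hx : ‖x‖ ≤ C) (hxa : ‖xa‖ ≤ C) (hne : x ≠ xa) :
    (T x - T xa) ^ (1 - θ / 2) ≤
      (2 : ℝ) ^ (θ / 2 - 1) *
        (inner ℝ ((ContinuousLinearMap.adjoint A) (A (x - xdag)) + α • x) (x - xa) : ℝ) /
          ‖ι (x - xa)‖ := by
  set u := x - xa
  have hx_eq : x = xa + u := (add_sub_cancel xa x).symm
  have hgrad : ContinuousLinearMap.adjoint A (A xa - A xdag) + α • xa = 0 :=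
    tikhonov_gradient_eq_zero hnormal
  set Q := ‖A u‖ ^ 2 + α * ‖u‖ ^ 2
  have hgap : T x - T xa = Q / 2 := by
    rw [show T = tikhonov A (A xdag) α from funext hT, hx_eq, tikhonov_add_sub_tikhonov, hgrad,
      inner_zero_left]
    ring
  have hinner : ⟪ContinuousLinearMap.adjoint A (A (x - xdag)) + α • x, u⟫_ℝ = Q := by
    rw [map_sub, hx_eq, inner_tikhonov_gradient_add, hgrad, inner_zero_left, zero_add]
  have hu : 0 < ‖u‖ := norm_pos_iff.mpr (sub_ne_zero.mpr hne)
  have hιu : 0 < ‖ι u‖ := norm_pos_iff.mpr ((map_ne_zero_iff ι hι).mpr (sub_ne_zero.mpr hne))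
  have hQ : 0 < Q := add_pos_of_nonneg_of_pos (sq_nonneg _) (by positivity)
  have hιu_le : ‖ι u‖ ≤ Q ^ (θ / 2) := calc
    ‖ι u‖ ≤ ‖A u‖ ^ θ := by simpa only [u, map_sub] using hstab x xa hx hxa
    _ = (‖A u‖ ^ 2) ^ (θ / 2) := by rw [← Real.rpow_natCast_mul (norm_nonneg _)]; ring_nf
    _ ≤ Q ^ (θ / 2) := by
      gcongr
      exacts [by linarith [hθ.1], le_add_of_nonneg_right (by positivity)]
  rw [hgap, hinner]
  exact half_rpow_one_sub_le_of_le_rpow hQ hιu hιu_le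

/-- KL inequality from a conditional stability estimate: if
`‖ι f₁ − ι f₂‖_X ≤ ‖A f₁ − A f₂‖_Y^θ` for all `f₁, f₂` of `Z`-norm at most `C`, and if
`x ≠ x_α` satisfies `‖x‖_Z ≤ C`, `‖x_α‖_Z ≤ C` (where `x_α` solves the normal equation),
then `(T_α(x) − T_α(x_α))^{1−θ/2} ≤ 2^{θ/2−1} ⟨A*A(x − x†) + α x, x − x_α⟩ / ‖ι(x − x_α)‖`. -/
theorem stmt16 {Z Y X : Type*} [NormedAddCommGroup Z] [InnerProductSpace ℝ Z]
    [CompleteSpace Z] [NormedAddCommGroup Y] [InnerProductSpace ℝ Y] [CompleteSpace Y]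
    [NormedAddCommGroup X] [NormedSpace ℝ X] [CompleteSpace X]
    (ι : Z →L[ℝ] X) (hι : Function.Injective ι)
    (A : Z →L[ℝ] Y) (xdag : Z)
    (θ C : ℝ) (hθ : θ ∈ Set.Ioo (0 : ℝ) 2) (hC : 0 < C)
    (hstab : ∀ f₁ f₂ : Z, ‖f₁‖ ≤ C → ‖f₂‖ ≤ C → ‖ι f₁ - ι f₂‖ ≤ ‖A f₁ - A f₂‖ ^ θ)
    (α : ℝ) (hα : 0 < α)
    (T : Z → ℝ) (hT : ∀ x, T x = (1 / 2) * ‖A x - A xdag‖ ^ 2 + (α / 2) * ‖x‖ ^ 2)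
    (xa : Z)
    (hnormal : (ContinuousLinearMap.adjoint A) (A xa) + α • xa =
      (ContinuousLinearMap.adjoint A) (A xdag))
    (x : Z) (hx : ‖x‖ ≤ C) (hxa : ‖xa‖ ≤ C) (hne : x ≠ xa) :
    (T x - T xa) ^ (1 - θ / 2) ≤
      (2 : ℝ) ^ (θ / 2 - 1) *
        (inner ℝ ((ContinuousLinearMap.adjoint A) (A (x - xdag)) + α • x) (x - xa) : ℝ) /
          ‖ι (x - xa)‖ :=
  stmt16_general ι hι A xdag θ C hθ hstab α hα T hT xa hnormal x hx hxa hne
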